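/- Let 0<α<n, q = n/(n−α), and q' = q/(q−1). Let w be a weight with [w]_{A_{1,q}} < ∞ and set v = w^q. Let D be a dyadic grid in ℝⁿ and Q ∈ D, and define the inner part I_{α,Q}^{D,in} v(x) = Σ_{P∈D, P⊆Q} |P|^{α/n} ⟨v⟩_P χ_P(x). Then there is a constant C = C(n,α) such that for almost every x ∈ Q, I_{α,Q}^{D,in} v(x) ≤ C [w]_{A_{1,q}}^{1+q} v(Q)^{1/q'} w(x), where v(Q) = ∫_Q v dx. -/

import Mathlib

open MeasureTheory ENNReal Set Filter

noncomputable section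

abbrev Rn (n : ℕ) := EuclideanSpace ℝ (Fin n)

/-- The half-open cube with corner `a` and side length `h`. -/
def cube {n : ℕ} (a : Rn n) (h : ℝ) : Set (Rn n) :=
  {x | ∀ i, a i ≤ x i ∧ x i < a i + h}

/-- Average of an `ℝ≥0∞`-valued function over a set (w.r.t. Lebesgue measure). -/
def eavg {n : ℕ} (Q : Set (Rn n)) (g : Rn n → ℝ≥0∞) : ℝ≥0∞ :=
  (volume Q)⁻¹ * ∫⁻ x in Q, g x

/-- A weight: a measurable `ℝ≥0∞`-valued function which is integrable on every cube. -/
def IsWeight {n : ℕ} (w : Rn n → ℝ≥0∞) : Prop :=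
  Measurable w ∧ ∀ (a : Rn n) (h : ℝ), 0 < h → (∫⁻ x in cube a h, w x) < ∞

/-- The fractional integral (Riesz potential) `I_α f`. -/
def fracInt {n : ℕ} (α : ℝ) (f : Rn n → ℝ) (x : Rn n) : ℝ :=
  ∫ y, f y / ‖x - y‖ ^ ((n : ℝ) - α)

/-- The fractional integral of a nonnegative function, as a lower integral. -/
def fracIntNN {n : ℕ} (α : ℝ) (f : Rn n → ℝ) (x : Rn n) : ℝ≥0∞ :=
  ∫⁻ y, ENNReal.ofReal (f y) / ENNReal.ofReal (‖x - y‖ ^ ((n : ℝ) - α))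

/-- The commutator `[b, I_α] f`. -/
def commFracInt {n : ℕ} (α : ℝ) (b f : Rn n → ℝ) (x : Rn n) : ℝ :=
  ∫ y, (b x - b y) * f y / ‖x - y‖ ^ ((n : ℝ) - α)

/-- The `A_{1,q}` characteristic of a weight. -/
def A1qConst {n : ℕ} (q : ℝ) (w : Rn n → ℝ≥0∞) : ℝ≥0∞ :=
  ⨆ (a : Rn n) (h : ℝ) (_ : 0 < h),
    essSup (fun x => (eavg (cube a h) fun y => w y ^ q) ^ (1 / q) * (w x)⁻¹)
      (volume.restrict (cube a h))

/-- The `A_{p,q}` characteristic of a weight (`p'` is the conjugate exponent of `p`). -/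
def ApqConst {n : ℕ} (p' q : ℝ) (w : Rn n → ℝ≥0∞) : ℝ≥0∞ :=
  ⨆ (a : Rn n) (h : ℝ) (_ : 0 < h),
    (eavg (cube a h) fun y => w y ^ q) ^ (1 / q) *
      (eavg (cube a h) fun y => w y ^ (-p')) ^ (1 / p')

/-- The Muckenhoupt `A_p` characteristic of a weight. -/
def ApConst {n : ℕ} (p : ℝ) (σ : Rn n → ℝ≥0∞) : ℝ≥0∞ :=
  ⨆ (a : Rn n) (h : ℝ) (_ : 0 < h),
    eavg (cube a h) σ * (eavg (cube a h) fun y => σ y ^ (1 - p / (p - 1))) ^ (p - 1)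

/-- The BMO norm. -/
def bmoNorm {n : ℕ} (b : Rn n → ℝ) : ℝ≥0∞ :=
  ⨆ (a : Rn n) (h : ℝ) (_ : 0 < h),
    eavg (cube a h) fun x => ENNReal.ofReal |b x - ⨍ y in cube a h, b y|

/-- A dyadic grid: a family of (corner, side length) data of cubes. -/
structure DyadicGrid (n : ℕ) where
  cubes : Set (Rn n × ℝ)
  side_pow : ∀ c ∈ cubes, ∃ k : ℤ, c.2 = (2 : ℝ) ^ k
  nested : ∀ c ∈ cubes, ∀ c' ∈ cubes,
    cube c.1 c.2 ∩ cube c'.1 c'.2 = cube c.1 c.2 ∨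
      cube c.1 c.2 ∩ cube c'.1 c'.2 = cube c'.1 c'.2 ∨
      cube c.1 c.2 ∩ cube c'.1 c'.2 = ∅
  partition : ∀ k : ℤ, ∀ x : Rn n, ∃! c, c ∈ cubes ∧ c.2 = (2 : ℝ) ^ k ∧ x ∈ cube c.1 c.2

/-- A sparse family of cubes. -/
def IsSparse {n : ℕ} (S : Set (Rn n × ℝ)) : Prop :=
  ∀ c ∈ S,
    volume (⋃ c' ∈ {c' ∈ S | cube c'.1 c'.2 ⊂ cube c.1 c.2}, cube c'.1 c'.2) ≤
      volume (cube c.1 c.2) / 2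

/-- The dyadic fractional integral operator associated to a family `S` of cubes. -/
def sumIalpha {n : ℕ} (α : ℝ) (S : Set (Rn n × ℝ)) (f : Rn n → ℝ) (x : Rn n) : ℝ≥0∞ :=
  ∑' c : S, (cube c.1.1 c.1.2).indicator
    (fun _ => volume (cube c.1.1 c.1.2) ^ (α / (n : ℝ)) *
      eavg (cube c.1.1 c.1.2) fun y => ENNReal.ofReal (f y)) x

/-- The dyadic commutator associated to a family `S` of cubes. -/
def sumComm {n : ℕ} (α : ℝ) (S : Set (Rn n × ℝ)) (b f : Rn n → ℝ) (x : Rn n) : ℝ≥0∞ :=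
  ∑' c : S, (cube c.1.1 c.1.2).indicator
    (fun z => volume (cube c.1.1 c.1.2) ^ (α / (n : ℝ)) *
      eavg (cube c.1.1 c.1.2) fun y => ENNReal.ofReal (|b z - b y| * f y)) x

/-- The dyadic fractional maximal operator associated to a family `S` of cubes. -/
def dyadicMax {n : ℕ} (α : ℝ) (S : Set (Rn n × ℝ)) (f : Rn n → ℝ) (x : Rn n) : ℝ≥0∞ :=
  ⨆ (c : S) (_ : x ∈ cube c.1.1 c.1.2),
    volume (cube c.1.1 c.1.2) ^ (α / (n : ℝ)) *
      eavg (cube c.1.1 c.1.2) fun y => ENNReal.ofReal |f y|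

/-- The normalized Luxemburg norm of `f` on `Q` w.r.t. the Young function `Φ`
and the measure `σ dx`. -/
def luxNorm {n : ℕ} (Φ : ℝ → ℝ) (Q : Set (Rn n)) (σ : Rn n → ℝ≥0∞) (f : Rn n → ℝ) : ℝ≥0∞ :=
  sInf {l : ℝ≥0∞ | ∃ lr : ℝ, 0 < lr ∧ l = ENNReal.ofReal lr ∧
    (∫⁻ x in Q, σ x)⁻¹ * ∫⁻ x in Q, ENNReal.ofReal (Φ (|f x| / lr)) * σ x ≤ 1}

/-- The weighted dyadic Orlicz fractional maximal operator. -/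
def maxOrlicz {n : ℕ} (Φ : ℝ → ℝ) (α : ℝ) (S : Set (Rn n × ℝ)) (σ : Rn n → ℝ≥0∞)
    (f : Rn n → ℝ) (x : Rn n) : ℝ≥0∞ :=
  ⨆ (c : S) (_ : x ∈ cube c.1.1 c.1.2),
    (∫⁻ y in cube c.1.1 c.1.2, σ y) ^ (α / (n : ℝ)) * luxNorm Φ (cube c.1.1 c.1.2) σ f

/-- The weighted dyadic fractional maximal operator (`Φ(t) = t` case). -/
def maxWeighted {n : ℕ} (α : ℝ) (S : Set (Rn n × ℝ)) (σ : Rn n → ℝ≥0∞)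
    (f : Rn n → ℝ) (x : Rn n) : ℝ≥0∞ :=
  ⨆ (c : S) (_ : x ∈ cube c.1.1 c.1.2),
    (∫⁻ y in cube c.1.1 c.1.2, σ y) ^ (α / (n : ℝ)) *
      ((∫⁻ y in cube c.1.1 c.1.2, σ y)⁻¹ * ∫⁻ y in cube c.1.1 c.1.2, ENNReal.ofReal |f y| * σ y)


section Helpers

lemma corner_mem_cube {n : ℕ} (a : Rn n) {h : ℝ} (hh : 0 < h) : a ∈ cube a h :=
  fun i => ⟨le_refl _, by linarith⟩

lemma cube_eq_preimage {n : ℕ} (a : Rn n) (h : ℝ) :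
    cube a h = (MeasurableEquiv.toLp 2 (Fin n → ℝ)).symm ⁻¹'
      (Set.univ.pi fun i => Set.Ico (a i) (a i + h)) := by
  ext x
  simp [cube, Set.mem_pi, MeasurableEquiv.coe_toLp_symm, Set.mem_Ico]

lemma measurableSet_cube {n : ℕ} (a : Rn n) (h : ℝ) : MeasurableSet (cube a h) := by
  rw [cube_eq_preimage]
  exact (MeasurableEquiv.toLp 2 (Fin n → ℝ)).symm.measurable
    (MeasurableSet.univ_pi fun i => measurableSet_Ico)

lemma volume_cube {n : ℕ} (a : Rn n) (h : ℝ) :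
    volume (cube a h) = ENNReal.ofReal h ^ n := by
  rw [cube_eq_preimage,
    (EuclideanSpace.volume_preserving_symm_measurableEquiv_toLp (Fin n)).measure_preimage
      (MeasurableSet.univ_pi fun i => measurableSet_Ico).nullMeasurableSet,
    volume_pi_pi]
  simp [Real.volume_Ico]

lemma scale_volume_lt {n : ℕ} (hn : 0 < n) {j k : ℤ} (hjk : j < k) :
    (ENNReal.ofReal ((2:ℝ)^j))^n < (ENNReal.ofReal ((2:ℝ)^k))^n := by
  refine ENNReal.pow_lt_pow_left hn.ne' ?_
  rw [ENNReal.ofReal_lt_ofReal_iff (zpow_pos two_pos k)]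
  exact zpow_lt_zpow_right₀ one_lt_two hjk

lemma scale_volume_pos {n : ℕ} (j : ℤ) : 0 < (ENNReal.ofReal ((2:ℝ)^j))^n :=
  ENNReal.pow_pos (ENNReal.ofReal_pos.mpr (zpow_pos two_pos j)) n

lemma scale_volume_ne_top {n : ℕ} (j : ℤ) : (ENNReal.ofReal ((2:ℝ)^j))^n ≠ ∞ :=
  (pow_ne_top ENNReal.ofReal_ne_top)

lemma scale_volume_succ {n : ℕ} (j : ℤ) :
    (ENNReal.ofReal ((2:ℝ)^(j-1)))^n = 2⁻¹^n * (ENNReal.ofReal ((2:ℝ)^j))^n := by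
  have h : (2:ℝ)^(j-1) = 2⁻¹ * 2^j := by
    rw [zpow_sub₀ (two_ne_zero), zpow_one]; ring
  rw [h, ENNReal.ofReal_mul (by norm_num), mul_pow]
  congr 2
  rw [ENNReal.ofReal_inv_of_pos two_pos]
  norm_num

lemma real_pow_ineq {d s : ℝ} (hd0 : 0 ≤ d) (hd1 : d ≤ 1) (hs0 : 0 ≤ s) (hs1 : s ≤ 1) :
    (1 - d) ^ s ≤ 1 - s * d := by
  have := Real.geom_mean_le_arith_mean2_weighted hs0 (by linarith : (0:ℝ) ≤ 1 - s)
    (by linarith : (0:ℝ) ≤ 1 - d) (by norm_num : (0:ℝ) ≤ 1) (by ring)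
  calc (1 - d) ^ s = (1 - d) ^ s * 1 ^ (1 - s) := by simp
    _ ≤ s * (1 - d) + (1 - s) * 1 := this
    _ = 1 - s * d := by ring

lemma ennreal_geom_ineq {δ : ℝ≥0∞} (hδ1 : δ ≤ 1) {s : ℝ} (hs0 : 0 < s) (hs1 : s ≤ 1) :
    ENNReal.ofReal s * δ ≤ 1 - (1 - δ) ^ s := by
  have hδt : δ ≠ ∞ := (lt_of_le_of_lt hδ1 one_lt_top).ne
  set d := δ.toReal with hd
  have hd0 : 0 ≤ d := ENNReal.toReal_nonneg
  have hd1 : d ≤ 1 := by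
    rw [hd, ← ENNReal.toReal_one]; exact ENNReal.toReal_mono one_ne_top hδ1
  have h1δ : (1 : ℝ≥0∞) - δ = ENNReal.ofReal (1 - d) := by
    rw [ENNReal.ofReal_sub _ hd0, ENNReal.ofReal_one, ENNReal.ofReal_toReal hδt]
  have hsd1 : s * d ≤ 1 := by nlinarith
  have key : (1 - δ) ^ s ≤ 1 - ENNReal.ofReal (s * d) := by
    rw [h1δ, ENNReal.ofReal_rpow_of_nonneg (by linarith) hs0.le,
      ← ENNReal.ofReal_one, ← ENNReal.ofReal_sub _ (by positivity)]
    exact ENNReal.ofReal_le_ofReal (real_pow_ineq hd0 hd1 hs0.le hs1)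
  have h1 : ENNReal.ofReal (s * d) ≤ 1 := by
    rw [← ENNReal.ofReal_one]; exact ENNReal.ofReal_le_ofReal hsd1
  calc ENNReal.ofReal s * δ = ENNReal.ofReal (s * d) := by
        rw [ENNReal.ofReal_mul hs0.le, ENNReal.ofReal_toReal hδt]
    _ = 1 - (1 - ENNReal.ofReal (s * d)) := (ENNReal.sub_sub_cancel one_ne_top h1).symm
    _ ≤ 1 - (1 - δ) ^ s := tsub_le_tsub_left key 1

lemma term_bound {ρ e I Awx : ℝ≥0∞} {s qi : ℝ} (hρ0 : ρ ≠ 0) (hρt : ρ ≠ ∞) (hIt : I ≠ ∞)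
    (he : e = ρ⁻¹ * I) (hsum : qi + s = 1) (hs : 0 < s)
    (hbound : e ^ qi ≤ Awx) : ρ ^ s * e ≤ Awx * I ^ s := by
  by_cases he0 : e = 0
  · simp [he0]
  have het : e ≠ ∞ := by
    rw [he]
    exact ENNReal.mul_ne_top (ENNReal.inv_ne_top.mpr hρ0) hIt
  have hsplit : e = e ^ qi * e ^ s := by
    conv_lhs => rw [← ENNReal.rpow_one e, ← hsum, ENNReal.rpow_add _ _ he0 het]
  have hes : e ^ s = (ρ ^ s)⁻¹ * I ^ s := by
    rw [he, ENNReal.mul_rpow_of_nonneg _ _ hs.le, ENNReal.inv_rpow]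
  have hρs0 : ρ ^ s ≠ 0 := by
    simp [ENNReal.rpow_eq_zero_iff, hρ0, hρt]
  have hρst : ρ ^ s ≠ ∞ := by
    simp [ENNReal.rpow_eq_top_iff, hρ0, hρt]
  calc ρ ^ s * e = ρ ^ s * (e ^ qi * ((ρ ^ s)⁻¹ * I ^ s)) := by rw [← hes, ← hsplit]
    _ = (ρ ^ s * (ρ ^ s)⁻¹) * (e ^ qi * I ^ s) := by ring
    _ = e ^ qi * I ^ s := by rw [ENNReal.mul_inv_cancel hρs0 hρst, one_mul]
    _ ≤ Awx * I ^ s := mul_le_mul_left hbound _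

lemma decay_step {α : Type*} [MeasurableSpace α] {μ : Measure α} {v : α → ℝ≥0∞}
    {R S : Set α} (hR : MeasurableSet R) (hS : MeasurableSet S) (hSR : S ⊆ R)
    {σ : ℝ≥0∞} (hvolS : μ S = σ * μ R)
    (hρ0 : μ R ≠ 0) (hρt : μ R ≠ ∞) (hIt : (∫⁻ x in R, v x ∂μ) ≠ ∞)
    {B : ℝ≥0∞} (hB0 : B ≠ 0) (hBt : B ≠ ∞)
    (hae : ∀ᵐ x ∂μ.restrict R, (μ R)⁻¹ * ∫⁻ y in R, v y ∂μ ≤ B * v x) :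
    (∫⁻ x in S, v x ∂μ) ≤ (1 - (1 - σ) * B⁻¹) * ∫⁻ x in R, v x ∂μ := by
  set I := ∫⁻ x in R, v x ∂μ with hI
  have hpt : ∀ᵐ x ∂μ.restrict R, B⁻¹ * ((μ R)⁻¹ * I) ≤ v x := by
    filter_upwards [hae] with x hx
    calc B⁻¹ * ((μ R)⁻¹ * I) ≤ B⁻¹ * (B * v x) := mul_le_mul_right hx _
      _ = v x := by rw [← mul_assoc, ENNReal.inv_mul_cancel hB0 hBt, one_mul]
  have hdiff_ae : ∀ᵐ x ∂μ.restrict (R \ S), B⁻¹ * ((μ R)⁻¹ * I) ≤ v x :=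
    ae_mono (Measure.restrict_mono Set.diff_subset le_rfl) hpt
  have hlow : (B⁻¹ * ((μ R)⁻¹ * I)) * μ (R \ S) ≤ ∫⁻ x in R \ S, v x ∂μ := by
    rw [← setLIntegral_const (R \ S) _]
    exact lintegral_mono_ae hdiff_ae
  have hμSt : μ S ≠ ∞ := ((measure_mono hSR).trans_lt (lt_top_iff_ne_top.mpr hρt)).ne
  have hμdiff : μ (R \ S) = (1 - σ) * μ R := by
    rw [measure_diff hSR hS.nullMeasurableSet hμSt, hvolS,
      ENNReal.sub_mul fun _ _ => hρt, one_mul]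
  have hsplit : (∫⁻ x in S, v x ∂μ) + ∫⁻ x in R \ S, v x ∂μ = I := by
    rw [hI, ← lintegral_union (hR.diff hS) Set.disjoint_sdiff_right, Set.union_diff_cancel hSR]
  have hRSfin : (∫⁻ x in R \ S, v x ∂μ) ≠ ∞ := by
    refine ne_top_of_le_ne_top hIt ?_
    rw [← hsplit]; exact le_add_self
  have h1 : (∫⁻ x in S, v x ∂μ) = I - ∫⁻ x in R \ S, v x ∂μ :=
    ENNReal.eq_sub_of_add_eq hRSfin hsplit
  rw [h1, ENNReal.sub_mul (fun _ _ => hIt), one_mul]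
  refine tsub_le_tsub_left ?_ I
  have hone : (μ R)⁻¹ * μ R = 1 := ENNReal.inv_mul_cancel hρ0 hρt
  calc (1 - σ) * B⁻¹ * I = B⁻¹ * ((μ R)⁻¹ * I) * ((1 - σ) * μ R) := by
        rw [← mul_one ((1 - σ) * B⁻¹ * I), ← hone]; ring
    _ = B⁻¹ * ((μ R)⁻¹ * I) * μ (R \ S) := by rw [hμdiff]
    _ ≤ _ := hlow

end Helpers

section GridHelpers

lemma cube_unique {n : ℕ} (D : DyadicGrid n) {c c' : Rn n × ℝ} {j : ℤ}
    (hc : c ∈ D.cubes) (hc' : c' ∈ D.cubes) (h2 : c.2 = (2:ℝ)^j) (h2' : c'.2 = (2:ℝ)^j)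
    {x : Rn n} (hx : x ∈ cube c.1 c.2) (hx' : x ∈ cube c'.1 c'.2) : c = c' :=
  (D.partition j x).unique ⟨hc, h2, hx⟩ ⟨hc', h2', hx'⟩

lemma subset_of_vol_lt {n : ℕ} (D : DyadicGrid n) {c c' : Rn n × ℝ}
    (hc : c ∈ D.cubes) (hc' : c' ∈ D.cubes) {x : Rn n}
    (hx : x ∈ cube c.1 c.2) (hx' : x ∈ cube c'.1 c'.2)
    (hvol : volume (cube c.1 c.2) < volume (cube c'.1 c'.2)) :
    cube c.1 c.2 ⊆ cube c'.1 c'.2 := by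
  rcases D.nested c hc c' hc' with h | h | h
  · exact Set.inter_eq_left.mp h
  · exfalso
    have hsub : cube c'.1 c'.2 ⊆ cube c.1 c.2 := by
      rw [← h]; exact Set.inter_subset_left
    exact absurd (measure_mono hsub) (not_le.mpr hvol)
  · exact absurd (Set.mem_inter hx hx') (by rw [h]; exact Set.notMem_empty x)

lemma countable_scale {n : ℕ} (D : DyadicGrid n) (j : ℤ) :
    {c : Rn n × ℝ | c ∈ D.cubes ∧ c.2 = (2:ℝ)^j}.Countable := by
  set S := {c : Rn n × ℝ | c ∈ D.cubes ∧ c.2 = (2:ℝ)^j} with hS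
  have key := MeasureTheory.Measure.countable_meas_pos_of_disjoint_iUnion
    (μ := (volume : Measure (Rn n)))
    (As := fun c : S => cube c.1.1 c.1.2)
    (fun c => measurableSet_cube _ _) ?_
  · have huniv : {i : S | 0 < volume (cube i.1.1 i.1.2)} = Set.univ := by
      refine Set.eq_univ_iff_forall.mpr fun c => ?_
      have h2 := c.2.2
      show 0 < volume (cube c.1.1 c.1.2)
      rw [volume_cube, h2]
      exact scale_volume_pos j
    rw [huniv] at key
    rw [← Set.countable_coe_iff]
    exact Set.countable_univ_iff.mp key
  · intro c c' hne
    rw [Function.onFun, Set.disjoint_iff_inter_eq_empty]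
    by_contra hcon
    obtain ⟨x, hx⟩ := Set.nonempty_iff_ne_empty.mpr hcon
    exact hne (Subtype.ext (cube_unique D c.2.1 c'.2.1 c.2.2 c'.2.2 hx.1 hx.2))

end GridHelpers

theorem inner_part_pointwise_bound (n : ℕ) (hn : 0 < n) (α q q' : ℝ)
    (hα : 0 < α) (hαn : α < n) (hq : q = n / (n - α)) (hq' : q' = q / (q - 1)) :
    ∃ C : ℝ≥0∞, C ≠ ∞ ∧
      ∀ w : Rn n → ℝ≥0∞, IsWeight w → IsWeight (fun x => w x ^ q) → A1qConst q w < ∞ →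
        ∀ D : DyadicGrid n, ∀ Q ∈ D.cubes,
          ∀ᵐ x ∂(volume.restrict (cube Q.1 Q.2)),
            (∑' c : {c : Rn n × ℝ // c ∈ D.cubes ∧ cube c.1 c.2 ⊆ cube Q.1 Q.2},
                (cube c.1.1 c.1.2).indicator
                  (fun _ => volume (cube c.1.1 c.1.2) ^ (α / (n : ℝ)) *
                    eavg (cube c.1.1 c.1.2) fun y => w y ^ q) x) ≤
              C * A1qConst q w ^ (1 + q) *
                (∫⁻ y in cube Q.1 Q.2, w y ^ q) ^ (1 / q') * w x := by
  have hn0 : (0:ℝ) < n := Nat.cast_pos.mpr hn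
  have hna : (0:ℝ) < n - α := by linarith
  have hq1 : 1 < q := by
    rw [hq, lt_div_iff₀ hna]; linarith
  have hq0 : 0 < q := lt_trans one_pos hq1
  have hs0 : 0 < α / (n:ℝ) := div_pos hα hn0
  have hs1 : α / (n:ℝ) < 1 := (div_lt_one hn0).mpr hαn
  have hqs : 1/q + α/(n:ℝ) = 1 := by
    rw [hq]; field_simp; ring
  have hq'_eq : q' = (α / (n:ℝ))⁻¹ := by
    have hqm1 : q - 1 = α / ((n:ℝ) - α) := by
      rw [hq]; field_simp; ring
    rw [hq', hqm1, hq, inv_div]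
    rw [div_div_div_eq]
    rw [div_eq_div_iff (by positivity) (by positivity)]
    ring
  have hq'inv : 1 / q' = α / (n:ℝ) := by
    rw [hq'_eq, one_div, inv_inv]
  set c₀ : ℝ≥0∞ := 1 - (2:ℝ≥0∞)⁻¹ ^ n with hc₀def
  have h2n1 : (2:ℝ≥0∞)⁻¹ ^ n < 1 := by
    calc (2:ℝ≥0∞)⁻¹ ^ n < 1 ^ n :=
          ENNReal.pow_lt_pow_left hn.ne' (ENNReal.inv_lt_one.mpr one_lt_two)
      _ = 1 := one_pow n
  have hc₀0 : c₀ ≠ 0 := by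
    rw [hc₀def]; exact (tsub_pos_of_lt h2n1).ne'
  have hc₀1 : c₀ ≤ 1 := tsub_le_self
  refine ⟨ENNReal.ofReal q' * c₀⁻¹,
    ENNReal.mul_ne_top ENNReal.ofReal_ne_top (ENNReal.inv_ne_top.mpr hc₀0), ?_⟩
  intro w hw hv hAfin D Q hQ
  set A := A1qConst q w with hAdef
  have hAt : A ≠ ∞ := hAfin.ne
  obtain ⟨k, hk⟩ := D.side_pow Q hQ
  have hQpos : 0 < Q.2 := by rw [hk]; exact zpow_pos two_pos k
  -- a.e. finiteness of w on every cube
  have hwfin : ∀ (a : Rn n) (h : ℝ), 0 < h →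
      ∀ᵐ x ∂volume.restrict (cube a h), w x ≠ ∞ := by
    intro a h hh
    filter_upwards [ae_lt_top hv.1 (hv.2 a h hh).ne] with x hx
    intro hcon
    rw [hcon, ENNReal.top_rpow_of_pos hq0] at hx
    exact absurd hx (lt_irrefl _)
  -- pointwise A_{1,q} bound, a.e. on each cube
  have havg : ∀ (a : Rn n) (h : ℝ), 0 < h → ∀ᵐ x ∂volume.restrict (cube a h),
      (eavg (cube a h) fun y => w y ^ q) ^ (1/q) ≤ A * w x := by
    intro a h hh
    have hess : essSup (fun x => (eavg (cube a h) fun y => w y ^ q) ^ (1 / q) * (w x)⁻¹)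
        (volume.restrict (cube a h)) ≤ A := by
      rw [hAdef, A1qConst]
      refine le_trans ?_ (le_iSup (fun a' : Rn n => ⨆ (h' : ℝ) (_ : 0 < h'),
        essSup (fun x => (eavg (cube a' h') fun y => w y ^ q) ^ (1 / q) * (w x)⁻¹)
          (volume.restrict (cube a' h'))) a)
      refine le_trans ?_ (le_iSup (fun h' : ℝ => ⨆ (_ : 0 < h'),
        essSup (fun x => (eavg (cube a h') fun y => w y ^ q) ^ (1 / q) * (w x)⁻¹)
          (volume.restrict (cube a h'))) h)
      exact le_iSup (fun _ : 0 < h =>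
        essSup (fun x => (eavg (cube a h) fun y => w y ^ q) ^ (1 / q) * (w x)⁻¹)
          (volume.restrict (cube a h))) hh
    filter_upwards [ae_le_essSup
      (fun x => (eavg (cube a h) fun y => w y ^ q) ^ (1 / q) * (w x)⁻¹),
      hwfin a h hh] with x hx hwx
    have hle : (eavg (cube a h) fun y => w y ^ q) ^ (1/q) * (w x)⁻¹ ≤ A := le_trans hx hess
    rcases eq_or_ne (w x) 0 with h0 | h0
    · rw [h0, mul_zero]
      rw [h0, ENNReal.inv_zero] at hle
      rcases eq_or_ne ((eavg (cube a h) fun y => w y ^ q) ^ (1/q)) 0 with he | he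
      · rw [he]
      · rw [ENNReal.mul_top he] at hle
        exact absurd (lt_of_le_of_lt hle hAfin) (lt_irrefl _)
    · calc (eavg (cube a h) fun y => w y ^ q) ^ (1/q)
          = (eavg (cube a h) fun y => w y ^ q) ^ (1/q) * (w x)⁻¹ * w x := by
            rw [mul_assoc, ENNReal.inv_mul_cancel h0 hwx, mul_one]
        _ ≤ A * w x := mul_le_mul_left hle _
  -- integrated (q-th power) form
  have havg2 : ∀ (a : Rn n) (h : ℝ), 0 < h → ∀ᵐ x ∂volume.restrict (cube a h),
      (volume (cube a h))⁻¹ * (∫⁻ y in cube a h, w y ^ q) ≤ A ^ q * w x ^ q := by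
    intro a h hh
    filter_upwards [havg a h hh] with x hx
    have h2 : (((eavg (cube a h) fun y => w y ^ q) ^ (1/q)) : ℝ≥0∞) ^ q ≤ (A * w x) ^ q :=
      ENNReal.rpow_le_rpow hx hq0.le
    rw [← ENNReal.rpow_mul, one_div, inv_mul_cancel₀ hq0.ne', ENNReal.rpow_one,
      ENNReal.mul_rpow_of_nonneg _ _ hq0.le] at h2
    simpa [eavg] using h2
  -- countability of the family of subcubes
  have hDsub_count : {c : Rn n × ℝ | c ∈ D.cubes ∧ cube c.1 c.2 ⊆ cube Q.1 Q.2}.Countable := by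
    have hsub : {c : Rn n × ℝ | c ∈ D.cubes ∧ cube c.1 c.2 ⊆ cube Q.1 Q.2} ⊆
        ⋃ m : ℕ, {c : Rn n × ℝ | c ∈ D.cubes ∧ c.2 = (2:ℝ)^(k - (m:ℤ))} := by
      rintro c ⟨hc, hcsub⟩
      obtain ⟨j, hj⟩ := D.side_pow c hc
      have hjk : j ≤ k := by
        by_contra hcon
        push_neg at hcon
        have h1 := measure_mono (μ := (volume : Measure (Rn n))) hcsub
        rw [volume_cube, volume_cube, hj, hk] at h1
        exact absurd h1 (not_le.mpr (scale_volume_lt hn hcon))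
      refine Set.mem_iUnion.mpr ⟨(k - j).toNat, hc, ?_⟩
      rw [hj]; congr 1; omega
    exact Set.Countable.mono hsub (Set.countable_iUnion fun m => countable_scale D _)
  -- the good-point property
  have h_good : ∀ᵐ x ∂volume.restrict (cube Q.1 Q.2),
      ∀ c ∈ {c : Rn n × ℝ | c ∈ D.cubes ∧ cube c.1 c.2 ⊆ cube Q.1 Q.2},
        x ∈ cube c.1 c.2 → (eavg (cube c.1 c.2) fun y => w y ^ q) ^ (1/q) ≤ A * w x := by
    rw [ae_ball_iff hDsub_count]
    rintro c ⟨hc, hcsub⟩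
    obtain ⟨j, hj⟩ := D.side_pow c hc
    have hcpos : 0 < c.2 := by rw [hj]; exact zpow_pos two_pos j
    exact ae_restrict_of_ae (ae_imp_of_ae_restrict (havg c.1 c.2 hcpos))
  rcases lt_or_ge A 1 with hA1 | hA1
  · -- degenerate case : all averages vanish
    have hzero : ∀ c : Rn n × ℝ, c ∈ D.cubes → (∫⁻ y in cube c.1 c.2, w y ^ q) = 0 := by
      intro c hc
      obtain ⟨j, hj⟩ := D.side_pow c hc
      have hcpos : 0 < c.2 := by rw [hj]; exact zpow_pos two_pos j
      have hIt : (∫⁻ y in cube c.1 c.2, w y ^ q) ≠ ∞ := (hv.2 c.1 c.2 hcpos).ne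
      have hρ0 : volume (cube c.1 c.2) ≠ 0 := by
        rw [volume_cube, hj]; exact (scale_volume_pos j).ne'
      have hρt : volume (cube c.1 c.2) ≠ ∞ := by
        rw [volume_cube]; exact pow_ne_top ENNReal.ofReal_ne_top
      have hle : (∫⁻ y in cube c.1 c.2, w y ^ q) ≤ A ^ q * ∫⁻ y in cube c.1 c.2, w y ^ q := by
        have h2 : (∫⁻ _ in cube c.1 c.2,
            ((volume (cube c.1 c.2))⁻¹ * ∫⁻ y in cube c.1 c.2, w y ^ q)) ≤
            ∫⁻ x in cube c.1 c.2, A ^ q * w x ^ q := lintegral_mono_ae (havg2 c.1 c.2 hcpos)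
        rw [setLIntegral_const, lintegral_const_mul _ hv.1] at h2
        calc (∫⁻ y in cube c.1 c.2, w y ^ q)
            = (volume (cube c.1 c.2))⁻¹ * (∫⁻ y in cube c.1 c.2, w y ^ q) *
              volume (cube c.1 c.2) := by
              rw [mul_comm ((volume (cube c.1 c.2))⁻¹), mul_assoc,
                ENNReal.inv_mul_cancel hρ0 hρt, mul_one]
          _ ≤ A ^ q * ∫⁻ y in cube c.1 c.2, w y ^ q := h2
      by_contra hI0
      have hAq1 : A ^ q < 1 := ENNReal.rpow_lt_one hA1 hq0
      have hlt : A ^ q * (∫⁻ y in cube c.1 c.2, w y ^ q) <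
          1 * ∫⁻ y in cube c.1 c.2, w y ^ q :=
        (ENNReal.mul_lt_mul_iff_left hI0 hIt).mpr hAq1
      rw [one_mul] at hlt
      exact absurd (lt_of_le_of_lt hle hlt) (lt_irrefl _)
    refine Eventually.of_forall fun x => ?_
    have hterm : ∀ c : {c : Rn n × ℝ // c ∈ D.cubes ∧ cube c.1 c.2 ⊆ cube Q.1 Q.2},
        (cube c.1.1 c.1.2).indicator
          (fun _ => volume (cube c.1.1 c.1.2) ^ (α / (n : ℝ)) *
            eavg (cube c.1.1 c.1.2) fun y => w y ^ q) x = 0 := by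
      intro c
      have h0 : (eavg (cube c.1.1 c.1.2) fun y => w y ^ q) = 0 := by
        simp only [eavg, hzero c.1 c.2.1, mul_zero]
      classical
      rw [Set.indicator_apply]
      simp [h0]
    rw [tsum_congr hterm, tsum_zero]
    exact zero_le
  · -- main case : A ≥ 1
    have hA0 : A ≠ 0 := by
      intro h; rw [h] at hA1; simp at hA1
    have hAq1 : 1 ≤ A ^ q := by
      calc (1:ℝ≥0∞) = 1 ^ q := (ENNReal.one_rpow q).symm
        _ ≤ A ^ q := ENNReal.rpow_le_rpow hA1 hq0.le
    have hAqt : A ^ q ≠ ∞ := ENNReal.rpow_ne_top_of_nonneg hq0.le hAt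
    have hAq0 : A ^ q ≠ 0 := (lt_of_lt_of_le one_pos hAq1).ne'
    have hδ1 : c₀ * (A ^ q)⁻¹ ≤ 1 := by
      calc c₀ * (A ^ q)⁻¹ ≤ 1 * 1 := mul_le_mul' hc₀1 (ENNReal.inv_le_one.mpr hAq1)
        _ = 1 := one_mul 1
    filter_upwards [h_good, ae_restrict_mem (measurableSet_cube Q.1 Q.2)] with x hgood hxQ
    -- the dyadic chain through x
    choose P hP using fun m : ℕ => (D.partition (k - (m:ℤ)) x).exists
    have hPmem : ∀ m, P m ∈ D.cubes := fun m => (hP m).1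
    have hPside : ∀ m : ℕ, (P m).2 = (2:ℝ)^(k - (m:ℤ)) := fun m => (hP m).2.1
    have hPx : ∀ m, x ∈ cube (P m).1 (P m).2 := fun m => (hP m).2.2
    have hvolP : ∀ m : ℕ, volume (cube (P m).1 (P m).2)
        = (ENNReal.ofReal ((2:ℝ)^(k-(m:ℤ))))^n := by
      intro m; rw [volume_cube, hPside m]
    have hP0 : P 0 = Q := by
      refine (D.partition (k - ((0:ℕ):ℤ)) x).unique ⟨hPmem 0, hPside 0, hPx 0⟩ ⟨hQ, ?_, hxQ⟩
      rw [hk]; norm_num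
    have hPsub : ∀ m : ℕ, cube (P m).1 (P m).2 ⊆ cube Q.1 Q.2 := by
      intro m
      rcases Nat.eq_zero_or_pos m with hm | hm
      · rw [hm, hP0]
      · refine subset_of_vol_lt D (hPmem m) hQ (hPx m) hxQ ?_
        rw [hvolP m, volume_cube, hk]
        exact scale_volume_lt hn (by omega)
    have hPnest : ∀ m : ℕ, cube (P (m+1)).1 (P (m+1)).2 ⊆ cube (P m).1 (P m).2 := by
      intro m
      refine subset_of_vol_lt D (hPmem (m+1)) (hPmem m) (hPx (m+1)) (hPx m) ?_
      rw [hvolP, hvolP]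
      exact scale_volume_lt hn (by omega)
    have hratio : ∀ m : ℕ, volume (cube (P (m+1)).1 (P (m+1)).2)
        = 2⁻¹ ^ n * volume (cube (P m).1 (P m).2) := by
      intro m
      rw [hvolP, hvolP, show k - ((m+1:ℕ):ℤ) = (k - (m:ℤ)) - 1 by push_cast; ring,
        scale_volume_succ]
    have hPpos : ∀ m : ℕ, 0 < (P m).2 := fun m => by
      rw [hPside m]; exact zpow_pos two_pos _
    set V : ℕ → ℝ≥0∞ := fun m => ∫⁻ y in cube (P m).1 (P m).2, w y ^ q with hVdef
    have hVfin : ∀ m, V m ≠ ∞ := fun m => (hv.2 (P m).1 (P m).2 (hPpos m)).ne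
    have hρ0 : ∀ m, volume (cube (P m).1 (P m).2) ≠ 0 := fun m => by
      rw [hvolP]; exact (scale_volume_pos _).ne'
    have hρt : ∀ m, volume (cube (P m).1 (P m).2) ≠ ∞ := fun m => by
      rw [hvolP]; exact scale_volume_ne_top _
    have hVdecay : ∀ m, V (m+1) ≤ (1 - c₀ * (A ^ q)⁻¹) * V m := by
      intro m
      have hd := decay_step (measurableSet_cube (P m).1 (P m).2)
        (measurableSet_cube (P (m+1)).1 (P (m+1)).2) (hPnest m) (hratio m)
        (hρ0 m) (hρt m) (hVfin m) hAq0 hAqt (havg2 (P m).1 (P m).2 (hPpos m))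
      rw [← hc₀def] at hd
      exact hd
    have hVgeom : ∀ m, V m ≤ (1 - c₀ * (A ^ q)⁻¹) ^ m * V 0 := by
      intro m
      induction m with
      | zero => simp
      | succ m ih =>
        calc V (m+1) ≤ (1 - c₀ * (A ^ q)⁻¹) * V m := hVdecay m
          _ ≤ (1 - c₀ * (A ^ q)⁻¹) * ((1 - c₀ * (A ^ q)⁻¹) ^ m * V 0) := mul_le_mul_right ih _
          _ = (1 - c₀ * (A ^ q)⁻¹) ^ (m+1) * V 0 := by ring
    have hV0 : V 0 = ∫⁻ y in cube Q.1 Q.2, w y ^ q := by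
      show (∫⁻ y in cube (P 0).1 (P 0).2, w y ^ q) = _
      rw [hP0]
    -- reindex the sum along the chain
    set f : {c : Rn n × ℝ // c ∈ D.cubes ∧ cube c.1 c.2 ⊆ cube Q.1 Q.2} → ℝ≥0∞ :=
      fun c => (cube c.1.1 c.1.2).indicator
        (fun _ => volume (cube c.1.1 c.1.2) ^ (α / (n : ℝ)) *
          eavg (cube c.1.1 c.1.2) fun y => w y ^ q) x with hfdef
    have hreindex : ∑' m : ℕ, f ⟨P m, hPmem m, hPsub m⟩ = ∑' c, f c := by
      refine Function.Injective.tsum_eq (g := fun m : ℕ =>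
        (⟨P m, hPmem m, hPsub m⟩ : {c : Rn n × ℝ // c ∈ D.cubes ∧
          cube c.1 c.2 ⊆ cube Q.1 Q.2})) ?_ ?_
      · intro m m' hmm
        have h2 : (P m).2 = (P m').2 := congrArg (fun c => c.1.2) hmm
        rw [hPside m, hPside m'] at h2
        have h3 := (zpow_right_strictMono₀ (one_lt_two (α := ℝ))).injective h2
        omega
      · intro c hc
        have hxc : x ∈ cube c.1.1 c.1.2 := by
          by_contra hxc
          exact hc (Set.indicator_of_notMem hxc _)
        obtain ⟨j, hj⟩ := D.side_pow c.1 c.2.1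
        have hjk : j ≤ k := by
          by_contra hcon
          push_neg at hcon
          have h1 := measure_mono (μ := (volume : Measure (Rn n))) c.2.2
          rw [volume_cube, volume_cube, hj, hk] at h1
          exact absurd h1 (not_le.mpr (scale_volume_lt hn hcon))
        refine ⟨(k - j).toNat, ?_⟩
        apply Subtype.ext
        refine cube_unique D (hPmem _) c.2.1 ?_ hj (hPx _) hxc
        rw [hPside]; congr 1; omega
    rw [← hreindex]
    -- termwise estimate
    have hterm : ∀ m : ℕ, f ⟨P m, hPmem m, hPsub m⟩ ≤
        (A * w x * (V 0) ^ (α/(n:ℝ))) * ((1 - c₀ * (A ^ q)⁻¹) ^ (α/(n:ℝ))) ^ m := by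
      intro m
      have hfm : f ⟨P m, hPmem m, hPsub m⟩ = volume (cube (P m).1 (P m).2) ^ (α/(n:ℝ)) *
          eavg (cube (P m).1 (P m).2) fun y => w y ^ q :=
        Set.indicator_of_mem (hPx m) _
      rw [hfm]
      have h1 : volume (cube (P m).1 (P m).2) ^ (α/(n:ℝ)) *
          eavg (cube (P m).1 (P m).2) (fun y => w y ^ q)
          ≤ (A * w x) * (V m) ^ (α/(n:ℝ)) :=
        term_bound (hρ0 m) (hρt m) (hVfin m) rfl hqs hs0
          (hgood (P m) ⟨hPmem m, hPsub m⟩ (hPx m))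
      refine le_trans h1 ?_
      have h2 : (V m) ^ (α/(n:ℝ)) ≤
          ((1 - c₀ * (A ^ q)⁻¹) ^ (α/(n:ℝ))) ^ m * (V 0) ^ (α/(n:ℝ)) := by
        calc (V m) ^ (α/(n:ℝ)) ≤ ((1 - c₀ * (A ^ q)⁻¹) ^ m * V 0) ^ (α/(n:ℝ)) :=
              ENNReal.rpow_le_rpow (hVgeom m) hs0.le
          _ = ((1 - c₀ * (A ^ q)⁻¹) ^ m) ^ (α/(n:ℝ)) * (V 0) ^ (α/(n:ℝ)) :=
              ENNReal.mul_rpow_of_nonneg _ _ hs0.le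
          _ = ((1 - c₀ * (A ^ q)⁻¹) ^ (α/(n:ℝ))) ^ m * (V 0) ^ (α/(n:ℝ)) := by
              rw [← ENNReal.rpow_natCast (1 - c₀ * (A ^ q)⁻¹) m, ← ENNReal.rpow_mul,
                ← ENNReal.rpow_natCast ((1 - c₀ * (A ^ q)⁻¹) ^ (α/(n:ℝ))) m,
                ← ENNReal.rpow_mul, mul_comm (m:ℝ) (α/(n:ℝ))]
      calc A * w x * (V m) ^ (α/(n:ℝ))
          ≤ A * w x * (((1 - c₀ * (A ^ q)⁻¹) ^ (α/(n:ℝ))) ^ m * (V 0) ^ (α/(n:ℝ))) :=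
            mul_le_mul_right h2 _
        _ = (A * w x * (V 0) ^ (α/(n:ℝ))) * ((1 - c₀ * (A ^ q)⁻¹) ^ (α/(n:ℝ))) ^ m := by
            ring
    calc ∑' m : ℕ, f ⟨P m, hPmem m, hPsub m⟩
        ≤ ∑' m : ℕ, (A * w x * (V 0) ^ (α/(n:ℝ))) * ((1 - c₀ * (A ^ q)⁻¹) ^ (α/(n:ℝ))) ^ m :=
          ENNReal.tsum_le_tsum hterm
      _ = (A * w x * (V 0) ^ (α/(n:ℝ))) * (1 - (1 - c₀ * (A ^ q)⁻¹) ^ (α/(n:ℝ)))⁻¹ := by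
          rw [ENNReal.tsum_mul_left, ENNReal.tsum_geometric]
      _ ≤ (A * w x * (V 0) ^ (α/(n:ℝ))) * (ENNReal.ofReal q' * c₀⁻¹ * A ^ q) := by
          refine mul_le_mul_right ?_ _
          have hgi : ENNReal.ofReal (α/(n:ℝ)) * (c₀ * (A ^ q)⁻¹) ≤
              1 - (1 - c₀ * (A ^ q)⁻¹) ^ (α/(n:ℝ)) :=
            ennreal_geom_ineq hδ1 hs0 hs1.le
          calc (1 - (1 - c₀ * (A ^ q)⁻¹) ^ (α/(n:ℝ)))⁻¹
              ≤ (ENNReal.ofReal (α/(n:ℝ)) * (c₀ * (A ^ q)⁻¹))⁻¹ := ENNReal.inv_le_inv' hgi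
            _ = (ENNReal.ofReal (α/(n:ℝ)))⁻¹ * (c₀⁻¹ * A ^ q) := by
                rw [ENNReal.mul_inv (Or.inr (ENNReal.mul_ne_top
                      (lt_of_le_of_lt hc₀1 one_lt_top).ne (ENNReal.inv_ne_top.mpr hAq0)))
                    (Or.inl ENNReal.ofReal_ne_top),
                  ENNReal.mul_inv (Or.inl hc₀0) (Or.inl (lt_of_le_of_lt hc₀1 one_lt_top).ne),
                  inv_inv]
            _ = ENNReal.ofReal q' * (c₀⁻¹ * A ^ q) := by
                rw [hq'_eq, ENNReal.ofReal_inv_of_pos hs0]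
            _ = ENNReal.ofReal q' * c₀⁻¹ * A ^ q := by ring
      _ = ENNReal.ofReal q' * c₀⁻¹ * A ^ (1 + q) * (V 0) ^ (α/(n:ℝ)) * w x := by
          rw [ENNReal.rpow_add 1 q hA0 hAt, ENNReal.rpow_one]; ring
      _ = ENNReal.ofReal q' * c₀⁻¹ * A ^ (1 + q) *
          (∫⁻ y in cube Q.1 Q.2, w y ^ q) ^ (1 / q') * w x := by
          rw [hq'inv, hV0]
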